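/- One-dimensional counterexample, subsolution part: Define u : [0,1] → ℝ by u(x) = −√(1 − x²) for x ∈ [0,1) and u(1) = 1. Then u is upper semicontinuous on [0,1] and is a viscosity subsolution of the generalized Dirichlet problem for the prescribed Gaussian curvature equation −u'' + (1 + (u')²)^{3/2} = 0 on (0,1) with boundary conditions u(0) = −1, u(1) = 1. -/

import Mathlib

open scoped Classical

open Filter Topology Set

/-- Lower envelope `F_*` of the generalized Dirichlet operator for the prescribed
Gaussian curvature equation `-u'' + (1 + (u')²)^{3/2} = 0` on `(0,1)` with boundary
conditions `u(0) = -1`, `u(1) = 1`. -/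
noncomputable def GCLower (x u p X : ℝ) : ℝ :=
  if x ∈ Set.Ioo (0:ℝ) 1 then -X + (1 + p ^ 2) ^ ((3:ℝ)/2)
  else if x = 0 then min (u + 1) (-X + (1 + p ^ 2) ^ ((3:ℝ)/2))
  else min (u - 1) (-X + (1 + p ^ 2) ^ ((3:ℝ)/2))

/-- Upper envelope `F^*` of the generalized Dirichlet operator for the prescribed
Gaussian curvature equation on `(0,1)` with boundary conditions `u(0) = -1`, `u(1) = 1`. -/
noncomputable def GCUpper (x u p X : ℝ) : ℝ :=
  if x ∈ Set.Ioo (0:ℝ) 1 then -X + (1 + p ^ 2) ^ ((3:ℝ)/2)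
  else if x = 0 then max (u + 1) (-X + (1 + p ^ 2) ^ ((3:ℝ)/2))
  else max (u - 1) (-X + (1 + p ^ 2) ^ ((3:ℝ)/2))

/-- Viscosity subsolution of the generalized Dirichlet problem for the prescribed
Gaussian curvature equation on `[0,1]`. -/
def IsGCSubsolution (u : ℝ → ℝ) : Prop :=
  UpperSemicontinuousOn u (Set.Icc 0 1) ∧
  ∀ φ : ℝ → ℝ, ContDiff ℝ 2 φ → ∀ x₀ ∈ Set.Icc (0:ℝ) 1,
    IsLocalMaxOn (fun x => u x - φ x) (Set.Icc 0 1) x₀ →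
      GCLower x₀ (u x₀) (deriv φ x₀) (deriv (deriv φ) x₀) ≤ 0

/-- Viscosity supersolution of the generalized Dirichlet problem for the prescribed
Gaussian curvature equation on `[0,1]`. -/
def IsGCSupersolution (w : ℝ → ℝ) : Prop :=
  LowerSemicontinuousOn w (Set.Icc 0 1) ∧
  ∀ φ : ℝ → ℝ, ContDiff ℝ 2 φ → ∀ x₀ ∈ Set.Icc (0:ℝ) 1,
    IsLocalMinOn (fun x => w x - φ x) (Set.Icc 0 1) x₀ →
      0 ≤ GCUpper x₀ (w x₀) (deriv φ x₀) (deriv (deriv φ) x₀)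

/-- Second derivative test (necessary condition) at a local max: if `f` has derivative
`f' x` at every `x` near `x₀`, `f'` has derivative `c` at `x₀`, and `f` has a local
maximum at `x₀`, then `c ≤ 0`. -/
lemma second_deriv_nonpos_of_isLocalMax {f f' : ℝ → ℝ} {x₀ c : ℝ}
    (hd : ∀ᶠ x in 𝓝 x₀, HasDerivAt f (f' x) x)
    (hd2 : HasDerivAt f' c x₀) (hmax : IsLocalMax f x₀) : c ≤ 0 := by
  by_contra hc
  push_neg at hc
  have h0 : f' x₀ = 0 := hmax.hasDerivAt_eq_zero hd.self_of_nhds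
  have hslope : Tendsto (slope f' x₀) (𝓝[≠] x₀) (𝓝 c) :=
    (hasDerivAt_iff_tendsto_slope).1 hd2
  have hpos : ∀ᶠ x in 𝓝[≠] x₀, 0 < slope f' x₀ x :=
    hslope.eventually (eventually_gt_nhds hc)
  have hall : ∀ᶠ x in 𝓝 x₀, HasDerivAt f (f' x) x ∧ f x ≤ f x₀ := hd.and hmax
  rw [Metric.eventually_nhds_iff] at hall
  obtain ⟨δ₁, hδ₁, h₁⟩ := hall
  rw [eventually_nhdsWithin_iff, Metric.eventually_nhds_iff] at hpos
  obtain ⟨δ₂, hδ₂, h₂⟩ := hpos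
  have hm1 := min_le_left δ₁ δ₂
  have hm2 := min_le_right δ₁ δ₂
  have hδ : 0 < min δ₁ δ₂ / 2 := by positivity
  set b := x₀ + min δ₁ δ₂ / 2 with hb
  have hx₀b : x₀ < b := by rw [hb]; linarith
  have hmem : ∀ x ∈ Icc x₀ b, HasDerivAt f (f' x) x ∧ f x ≤ f x₀ := by
    intro x hx
    have h1 := hx.1
    have h2 := hx.2
    rw [hb] at h2
    apply h₁
    rw [Real.dist_eq, abs_lt]
    constructor <;> linarith
  have hmono : StrictMonoOn f (Icc x₀ b) := by
    apply strictMonoOn_of_deriv_pos (convex_Icc _ _)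
    · intro x hx
      exact ((hmem x hx).1).continuousAt.continuousWithinAt
    · intro x hx
      rw [interior_Icc] at hx
      have hxm : x ∈ Icc x₀ b := Ioo_subset_Icc_self hx
      rw [((hmem x hxm).1).deriv]
      have hx1 := hx.1
      have hx2 := hx.2
      rw [hb] at hx2
      have hsp : 0 < slope f' x₀ x := by
        apply h₂
        · rw [Real.dist_eq, abs_lt]
          constructor <;> linarith
        · exact ne_of_gt hx1
      have hne : x - x₀ ≠ 0 := by
        intro h; rw [sub_eq_zero] at h; exact absurd h (ne_of_gt hx1)
      have heq : f' x = slope f' x₀ x * (x - x₀) := by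
        rw [slope_def_field, h0, sub_zero, div_mul_cancel₀ _ hne]
      rw [heq]
      exact mul_pos hsp (by linarith)
  have hlt : f x₀ < f b := hmono ⟨le_refl _, le_of_lt hx₀b⟩ ⟨le_of_lt hx₀b, le_refl _⟩ hx₀b
  have hle : f b ≤ f x₀ := (hmem b ⟨le_of_lt hx₀b, le_refl _⟩).2
  linarith

/-- Derivative of `x ↦ √(1 - x²)` on `(-1, 1)`. -/
lemma sqrt_part_hasDerivAt {x : ℝ} (hx : x ∈ Set.Ioo (-1:ℝ) 1) :
    HasDerivAt (fun y : ℝ => Real.sqrt (1 - y ^ 2)) (-(x / Real.sqrt (1 - x ^ 2))) x := by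
  have hpos : 0 < 1 - x ^ 2 := by nlinarith [hx.1, hx.2]
  have hs : 0 < Real.sqrt (1 - x ^ 2) := Real.sqrt_pos.2 hpos
  have h1 : HasDerivAt (fun y : ℝ => 1 - y ^ 2) (-(2 * x)) x := by
    simpa using (hasDerivAt_pow 2 x).const_sub 1
  have h2 := (Real.hasDerivAt_sqrt (ne_of_gt hpos)).comp x h1
  exact h2.congr_deriv (by ring)

/-- The counterexample function is upper semicontinuous on `[0,1]`. -/
lemma gc_usc : UpperSemicontinuousOn
    (fun x : ℝ => if x < 1 then -Real.sqrt (1 - x ^ 2) else 1) (Set.Icc 0 1) := by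
  intro x hx
  by_cases hx1 : x < 1
  · apply ContinuousWithinAt.upperSemicontinuousWithinAt
    apply ContinuousAt.continuousWithinAt
    have hcont : ContinuousAt (fun y : ℝ => -Real.sqrt (1 - y ^ 2)) x := by
      have : Continuous (fun y : ℝ => -Real.sqrt (1 - y ^ 2)) := by continuity
      exact this.continuousAt
    apply hcont.congr
    filter_upwards [Iio_mem_nhds hx1] with y hy
    rw [if_pos (mem_Iio.mp hy)]
  · intro y hy
    simp only [if_neg hx1] at hy
    filter_upwards with z
    by_cases hz : z < 1
    · simp only [if_pos hz]
      have : 0 ≤ Real.sqrt (1 - z ^ 2) := Real.sqrt_nonneg _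
      linarith
    · simp only [if_neg hz]; exact hy

/-- The key interior estimate for the subsolution property. -/
lemma gc_interior (φ : ℝ → ℝ) (hφ : ContDiff ℝ 2 φ) (x₀ : ℝ)
    (hI : x₀ ∈ Set.Ioo (0:ℝ) 1)
    (hmax : IsLocalMaxOn (fun x => (if x < 1 then -Real.sqrt (1 - x ^ 2) else 1) - φ x)
      (Set.Icc 0 1) x₀) :
    GCLower x₀ ((if x₀ < 1 then -Real.sqrt (1 - x₀ ^ 2) else 1))
      (deriv φ x₀) (deriv (deriv φ) x₀) ≤ 0 := by
  set u : ℝ → ℝ := fun x => if x < 1 then -Real.sqrt (1 - x ^ 2) else 1 with hu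
  have hI' : x₀ ∈ Set.Ioo (-1:ℝ) 1 := ⟨by linarith [hI.1], hI.2⟩
  set s := Real.sqrt (1 - x₀ ^ 2) with hsdef
  have hpos : 0 < 1 - x₀ ^ 2 := by nlinarith [hI'.1, hI'.2]
  have hs : 0 < s := Real.sqrt_pos.2 hpos
  have hsq : s ^ 2 = 1 - x₀ ^ 2 := Real.sq_sqrt (le_of_lt hpos)
  have hn : Set.Icc (0:ℝ) 1 ∈ 𝓝 x₀ := Icc_mem_nhds hI.1 hI.2
  have hmaxloc : IsLocalMax (fun x => u x - φ x) x₀ := by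
    have h := nhdsWithin_eq_nhds.2 hn
    unfold IsLocalMaxOn at hmax
    rwa [h] at hmax
  set f : ℝ → ℝ := fun x => -Real.sqrt (1 - x ^ 2) - φ x with hf
  have hfeq : (fun x => u x - φ x) =ᶠ[𝓝 x₀] f := by
    filter_upwards [Iio_mem_nhds hI.2] with x hx
    simp only [hu, hf]
    rw [if_pos (mem_Iio.mp hx)]
  have hmaxf : IsLocalMax f x₀ := hmaxloc.congr hfeq
  have hφd : Differentiable ℝ φ := hφ.differentiable (by norm_num)
  have hφ1 : ContDiff ℝ 1 (deriv φ) :=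
    (contDiff_succ_iff_deriv.mp (show ContDiff ℝ (1+1) φ by norm_num [hφ])).2.2
  have hφ'd : Differentiable ℝ (deriv φ) := hφ1.differentiable (by norm_num)
  set f' : ℝ → ℝ := fun x => x / Real.sqrt (1 - x ^ 2) - deriv φ x with hf'
  have hd : ∀ᶠ x in 𝓝 x₀, HasDerivAt f (f' x) x := by
    filter_upwards [Ioo_mem_nhds hI'.1 hI'.2] with x hx
    have hv : HasDerivAt (fun y : ℝ => -Real.sqrt (1 - y ^ 2))
        (x / Real.sqrt (1 - x ^ 2)) x := by
      exact (sqrt_part_hasDerivAt hx).neg.congr_deriv (neg_neg _)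
    exact hv.sub (hφd x).hasDerivAt
  have hp : deriv φ x₀ = x₀ / s := by
    have h0 : f' x₀ = 0 := hmaxf.hasDerivAt_eq_zero hd.self_of_nhds
    simp only [hf'] at h0
    linarith
  have hv' : HasDerivAt (fun y : ℝ => y / Real.sqrt (1 - y ^ 2)) (1 / s ^ 3) x₀ := by
    have h := (hasDerivAt_id x₀).div (sqrt_part_hasDerivAt hI') (ne_of_gt hs)
    refine h.congr_deriv ?_
    simp only [id, ← hsdef]
    field_simp
    nlinarith [hsq]
  have hd2 : HasDerivAt f' (1 / s ^ 3 - deriv (deriv φ) x₀) x₀ :=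
    hv'.sub (hφ'd x₀).hasDerivAt
  have hc : 1 / s ^ 3 - deriv (deriv φ) x₀ ≤ 0 :=
    second_deriv_nonpos_of_isLocalMax hd hd2 hmaxf
  rw [GCLower, if_pos hI, hp]
  have h1 : 1 + (x₀ / s) ^ 2 = (1 / s) ^ 2 := by
    field_simp
    linarith [hsq]
  have h2 : (1 + (x₀ / s) ^ 2) ^ ((3:ℝ)/2) = 1 / s ^ 3 := by
    rw [h1, ← Real.rpow_natCast (1 / s) 2,
      ← Real.rpow_mul (by positivity : (0:ℝ) ≤ 1 / s)]
    norm_num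
  rw [h2]
  linarith

/-- **One-dimensional counterexample, subsolution part**: the function equal to
`-√(1 - x²)` on `[0,1)` and `1` at `x = 1` is upper semicontinuous on `[0,1]` and is a
viscosity subsolution of the generalized Dirichlet problem. -/
theorem gaussian_curvature_subsolution :
    UpperSemicontinuousOn
      (fun x : ℝ => if x < 1 then -Real.sqrt (1 - x ^ 2) else 1) (Set.Icc 0 1) ∧
    IsGCSubsolution (fun x : ℝ => if x < 1 then -Real.sqrt (1 - x ^ 2) else 1) := by
  refine ⟨gc_usc, gc_usc, ?_⟩
  intro φ hφ x₀ hx₀ hmax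
  by_cases h0 : x₀ = 0
  · subst h0
    have h00 : (0:ℝ) ∉ Set.Ioo (0:ℝ) 1 := by simp
    rw [GCLower, if_neg h00, if_pos rfl]
    refine le_trans (min_le_left _ _) ?_
    norm_num [Real.sqrt_one]
  · by_cases h1 : x₀ = 1
    · subst h1
      have h11 : (1:ℝ) ∉ Set.Ioo (0:ℝ) 1 := by simp
      rw [GCLower, if_neg h11, if_neg (by norm_num)]
      refine le_trans (min_le_left _ _) ?_
      norm_num
    · have hI : x₀ ∈ Set.Ioo (0:ℝ) 1 :=
        ⟨lt_of_le_of_ne hx₀.1 (Ne.symm h0), lt_of_le_of_ne hx₀.2 h1⟩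
      exact gc_interior φ hφ x₀ hI hmax
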